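/- arXiv:2208.06529 — 2 statements merged into one kernel-verified Lean document; each statement's English description precedes it below -/
import Mathlib

section
/- Let (T, μ, η, m, m_I) be a bimonad on a monoidal category. Then the left fusion operator h^l_{A,B} : T(A ⊗ T(B)) → T(A) ⊗ T(B) is a T-algebra morphism from the free algebra (T(A ⊗ T(B)), μ_{A⊗T(B)}) to the tensor product algebra (T(A), μ_A) ⊗^T (T(B), μ_B), where the latter has structure map (μ_A ⊗ μ_B) ∘ m_{T(A),T(B)}. -/
open CategoryTheory MonoidalCategory

universe v u

/-- A bimonad (comonoidal/opmonoidal monad) on a monoidal category. -/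
structure Bimonad (C : Type u) [Category.{v} C] [MonoidalCategory C] where
  T : Monad C
  m : ∀ A B : C, T.obj (A ⊗ B) ⟶ T.obj A ⊗ T.obj B
  mI : T.obj (𝟙_ C) ⟶ 𝟙_ C
  m_natural : ∀ {A A' B B' : C} (f : A ⟶ A') (g : B ⟶ B'),
    T.map (f ⊗ₘ g) ≫ m A' B' = m A B ≫ (T.map f ⊗ₘ T.map g)
  m_assoc : ∀ A B D : C,
    m (A ⊗ B) D ≫ (m A B ▷ T.obj D) ≫ (α_ (T.obj A) (T.obj B) (T.obj D)).hom =
      T.map (α_ A B D).hom ≫ m A (B ⊗ D) ≫ (T.obj A ◁ m B D)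
  m_left_unit : ∀ A : C,
    T.map (λ_ A).inv ≫ m (𝟙_ C) A ≫ (mI ▷ T.obj A) ≫ (λ_ (T.obj A)).hom = 𝟙 (T.obj A)
  m_right_unit : ∀ A : C,
    T.map (ρ_ A).inv ≫ m A (𝟙_ C) ≫ (T.obj A ◁ mI) ≫ (ρ_ (T.obj A)).hom = 𝟙 (T.obj A)
  mu_comonoidal : ∀ A B : C,
    T.μ.app (A ⊗ B) ≫ m A B =
      T.map (m A B) ≫ m (T.obj A) (T.obj B) ≫ (T.μ.app A ⊗ₘ T.μ.app B)
  mu_counit : T.μ.app (𝟙_ C) ≫ mI = T.map mI ≫ mI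
  eta_comonoidal : ∀ A B : C, T.η.app (A ⊗ B) ≫ m A B = T.η.app A ⊗ₘ T.η.app B
  eta_counit : T.η.app (𝟙_ C) ≫ mI = 𝟙 (𝟙_ C)

namespace Bimonad

variable {C : Type u} [Category.{v} C] [MonoidalCategory C]

/-- The left fusion operator `h^l_{A,B} = (1 ⊗ μ_B) ∘ m_{A,T(B)}`. -/
def hl (W : Bimonad C) (A B : C) : W.T.obj (A ⊗ W.T.obj B) ⟶ W.T.obj A ⊗ W.T.obj B :=
  W.m A (W.T.obj B) ≫ (W.T.obj A ◁ W.T.μ.app B)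

/-- The right fusion operator `h^r_{A,B} = (μ_A ⊗ 1) ∘ m_{T(A),B}`. -/
def hr (W : Bimonad C) (A B : C) : W.T.obj (W.T.obj A ⊗ B) ⟶ W.T.obj A ⊗ W.T.obj B :=
  W.m (W.T.obj A) B ≫ (W.T.μ.app A ▷ W.T.obj B)

end Bimonad

/-! Both sides factor as `T(m_{A,TB}) ≫ m_{TA,TTB} ≫ (μ_A ⊗ -)`: the left by comonoidality of `μ`,
the right by naturality of `m`. The remaining factors `μ_{TB} ≫ μ_B` and `T(μ_B) ≫ μ_B` agree by
associativity of the monad. -/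

namespace Bimonad

variable {C : Type u} [Category.{v} C] [MonoidalCategory C]

theorem map_whiskerLeft_comp_m (W : Bimonad C) (X : C) {Y Y' : C} (g : Y ⟶ Y') :
    W.T.map (X ◁ g) ≫ W.m X Y' = W.m X Y ≫ (W.T.obj X ◁ W.T.map g) := by
  simpa only [id_tensorHom, CategoryTheory.Functor.map_id] using W.m_natural (𝟙 X) g

theorem mu_comp_hl (W : Bimonad C) (A B : C) :
    W.T.μ.app (A ⊗ W.T.obj B) ≫ W.hl A B =
      W.T.map (W.m A (W.T.obj B)) ≫ W.m (W.T.obj A) (W.T.obj (W.T.obj B)) ≫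
        (W.T.μ.app A ⊗ₘ (W.T.μ.app (W.T.obj B) ≫ W.T.μ.app B)) := by
  rw [hl, reassoc_of% W.mu_comonoidal, ← id_tensorHom, tensorHom_comp_tensorHom,
    Category.comp_id]

theorem map_hl_comp_m (W : Bimonad C) (A B : C) :
    W.T.map (W.hl A B) ≫ W.m (W.T.obj A) (W.T.obj B) =
      W.T.map (W.m A (W.T.obj B)) ≫ W.m (W.T.obj A) (W.T.obj (W.T.obj B)) ≫
        (W.T.obj (W.T.obj A) ◁ W.T.map (W.T.μ.app B)) := by
  rw [hl, CategoryTheory.Functor.map_comp, Category.assoc, map_whiskerLeft_comp_m]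

end Bimonad

/-- The left fusion operator is a T-algebra morphism from the free algebra on `A ⊗ T B`
to the tensor product algebra of the free algebras on `A` and `B`. -/
theorem hl_is_algebra_hom {C : Type u} [Category.{v} C] [MonoidalCategory C]
    (W : Bimonad C) (A B : C) :
    W.T.μ.app (A ⊗ W.T.obj B) ≫ W.hl A B =
      W.T.map (W.hl A B) ≫ W.m (W.T.obj A) (W.T.obj B) ≫ (W.T.μ.app A ⊗ₘ W.T.μ.app B) := by
  rw [W.mu_comp_hl, reassoc_of% W.map_hl_comp_m, ← W.T.assoc, ← id_tensorHom,
    tensorHom_comp_tensorHom, Category.id_comp]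
end

section
/- Let (T, μ, η, m, m_I) be a Hopf monad on a monoidal category (a bimonad whose fusion operators are invertible). If η_I ∘ m_I = 1_{T(I)}, then T is an idempotent monad, i.e., every μ_A is an isomorphism. -/
open CategoryTheory MonoidalCategory

universe v u

/-!
Whiskering the left unit axiom of a bimonad by `μ_A` gives
`μ_A = λ ∘ (m_I ⊗ 1) ∘ h^l_{I,A} ∘ T(λ⁻¹)`. For a Hopf monad `h^l_{I,A}` is invertible, and
`η_I ∘ m_I = 1` together with the counit axiom `m_I ∘ η_I = 1` makes `m_I` invertible, so every
factor, hence `μ_A`, is an isomorphism.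
-/

namespace Bimonad

variable {C : Type u} [Category.{v} C] [MonoidalCategory C] (W : Bimonad C)

theorem μ_app_eq_hl (A : C) :
    W.T.μ.app A = W.T.map (λ_ (W.T.obj A)).inv ≫ W.hl (𝟙_ C) A ≫ (W.mI ▷ W.T.obj A) ≫
      (λ_ (W.T.obj A)).hom := by
  calc W.T.μ.app A
      = (W.T.map (λ_ (W.T.obj A)).inv ≫ W.m (𝟙_ C) (W.T.obj A) ≫
          (W.mI ▷ W.T.obj (W.T.obj A)) ≫ (λ_ (W.T.obj (W.T.obj A))).hom) ≫ W.T.μ.app A := by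
        rw [W.m_left_unit, Category.id_comp]
    _ = _ := by
        simp only [hl, Category.assoc, leftUnitor_naturality, whisker_exchange_assoc]

theorem isIso_mI_of_mI_comp_η (h : W.mI ≫ W.T.η.app (𝟙_ C) = 𝟙 (W.T.obj (𝟙_ C))) :
    IsIso W.mI :=
  ⟨_, h, W.eta_counit⟩

theorem isIso_μ_app_of_isIso_hl [IsIso W.mI] (A : C) [IsIso (W.hl (𝟙_ C) A)] :
    IsIso (W.T.μ.app A) := by
  rw [μ_app_eq_hl]
  infer_instance

end Bimonad

theorem hopf_monad_idempotent_of_unit_general {C : Type u} [Category.{v} C] [MonoidalCategory C]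
    (W : Bimonad C)
    (hl_iso : ∀ A B : C, IsIso (W.hl A B))
    (h : W.mI ≫ W.T.η.app (𝟙_ C) = 𝟙 (W.T.obj (𝟙_ C))) :
    ∀ A : C, IsIso (W.T.μ.app A) := by
  intro A
  have := W.isIso_mI_of_mI_comp_η h
  have := hl_iso (𝟙_ C) A
  exact W.isIso_μ_app_of_isIso_hl A

/-- A Hopf monad (a bimonad with invertible fusion operators) whose unit at the monoidal
unit is inverse to the counit is an idempotent monad. -/
theorem hopf_monad_idempotent_of_unit {C : Type u} [Category.{v} C] [MonoidalCategory C]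
    (W : Bimonad C)
    (hl_iso : ∀ A B : C, IsIso (W.hl A B))
    (hr_iso : ∀ A B : C, IsIso (W.hr A B))
    (h : W.mI ≫ W.T.η.app (𝟙_ C) = 𝟙 (W.T.obj (𝟙_ C))) :
    ∀ A : C, IsIso (W.T.μ.app A) :=
  hopf_monad_idempotent_of_unit_general W hl_iso h
end
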